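/- Let T be a triangulation of P(n,k) = (Δ_{n−1})^k with a factorwise-dual-Sperner labeling ℓ : V(T) → [n]^k. Then there exists an equivalent factorwise-dual-Sperner labeling ℓ' of T which is a Sperner labeling of the polytope P(n,k) (vertices of P(n,k) get distinct labels and every vertex of T gets a label occurring among the vertices of the minimal face of P(n,k) containing it). -/

import Mathlib

open Finset

/-- The vertex of `P(n,k) = (Δ_{n-1})^k` indexed by `w ∈ [n]^k`. -/
def vertPt (n k : ℕ) (w : Fin k → Fin n) : Fin k → Fin n → ℝ :=
  fun i j => if j = w i then 1 else 0

/-- A labeling `ℓ` of a set `Vs` of points of `P(n,k)` is *factorwise-dual-Sperner* if,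
whenever `empty(v_i) = [n] \ supp(v_i)` is nonempty, `ℓ_i(v) ∈ empty(v_i)`. -/
def IsFDSLabeling (n k : ℕ) (Vs : Set (Fin k → Fin n → ℝ))
    (ℓ : (Fin k → Fin n → ℝ) → (Fin k → Fin n)) : Prop :=
  ∀ v ∈ Vs, ∀ i, (∃ j, v i j = 0) → v i (ℓ v i) = 0

/-- Two labelings are *equivalent* if they agree in coordinate `i` at `v` whenever
`empty(v_i) = ∅`, i.e. whenever `v_i` has full support. -/
def EquivLabeling (n k : ℕ) (Vs : Set (Fin k → Fin n → ℝ))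
    (ℓ ℓ' : (Fin k → Fin n → ℝ) → (Fin k → Fin n)) : Prop :=
  ∀ v ∈ Vs, ∀ i, (∀ j, v i j ≠ 0) → ℓ' v i = ℓ v i

/-!
The new label of a factor `v_i` with `supp(v_i) ≠ ∅, [n]` is the cyclic successor `j + 1` of
some `j ∈ supp(v_i)` with `j + 1 ∉ supp(v_i)`; such a `j` exists because the only nonempty
subset of `Fin n` closed under `j ↦ j + 1` is everything. On a vertex `w` of `P(n,k)` this
produces the label `w + 1`, so vertices get distinct labels, and every vertex `v` of the
triangulation is labeled like the vertex `w = ℓ'(v) - 1` with `w_i ∈ supp(v_i)`.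
-/

theorem Set.eq_univ_of_mapsTo_finRotate {n : ℕ} {s : Set (Fin n)} (hs : s.Nonempty)
    (h : Set.MapsTo (finRotate n) s s) : s = Set.univ := by
  obtain ⟨j, hj⟩ := hs
  refine Set.eq_univ_of_forall fun i => ?_
  have := i.neZero
  have hi : i = finCycle (i - j) j := by simp
  rw [hi, finCycle_eq_finRotate_iterate]
  exact h.iterate _ hj

section RotateLabel

variable {M : Type*} [Zero M] {n : ℕ}

theorem exists_ne_zero_and_finRotate_eq_zero {x : Fin n → M} (h0 : ∃ j, x j = 0)
    (h1 : ∃ j, x j ≠ 0) : ∃ j, x j ≠ 0 ∧ x (finRotate n j) = 0 := by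
  by_contra! h
  obtain ⟨j, hj⟩ := h0
  have huniv : {j | x j ≠ 0} = Set.univ := Set.eq_univ_of_mapsTo_finRotate h1 h
  exact Set.eq_univ_iff_forall.mp huniv j hj

open Classical in
/-- `finRotate n j` is the paper's `j + 1 (mod n)`. -/
noncomputable def rotateLabel (x : Fin n → M) (a : Fin n) : Fin n :=
  if h : ∃ j, x j ≠ 0 ∧ x (finRotate n j) = 0 then finRotate n h.choose else a

theorem rotateLabel_apply_eq_zero {x : Fin n → M} (a : Fin n) (h0 : ∃ j, x j = 0) :
    x (rotateLabel x a) = 0 := by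
  by_cases h1 : ∃ j, x j ≠ 0
  · have h := exists_ne_zero_and_finRotate_eq_zero h0 h1
    rw [rotateLabel, dif_pos h]
    exact h.choose_spec.2
  · exact not_not.mp (not_exists.mp h1 _)

theorem rotateLabel_of_forall_ne_zero {x : Fin n → M} (a : Fin n) (h : ∀ j, x j ≠ 0) :
    rotateLabel x a = a := by
  rw [rotateLabel, dif_neg fun ⟨j, _, hj⟩ => h _ hj]

theorem rotateLabel_of_forall_ne_eq_zero {x : Fin n → M} (a : Fin n) {c : Fin n}
    (hc : x c ≠ 0) (hx : ∀ j ≠ c, x j = 0) : rotateLabel x a = finRotate n c := by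
  unfold rotateLabel
  split_ifs with h
  · congr 1
    by_contra hne
    exact h.choose_spec.1 (hx _ hne)
  · have hfix : finRotate n c = c := by
      by_contra hne
      exact h ⟨c, hc, hx _ hne⟩
    have huniv : {c} = Set.univ :=
      Set.eq_univ_of_mapsTo_finRotate (Set.singleton_nonempty c) (by simpa using hfix)
    rw [hfix]
    exact Set.eq_univ_iff_forall.mp huniv a

theorem exists_rotateLabel_eq_finRotate {x : Fin n → M} (a : Fin n) (hx : ∃ j, x j ≠ 0) :
    ∃ c, x c ≠ 0 ∧ rotateLabel x a = finRotate n c := by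
  by_cases h : ∃ j, x j ≠ 0 ∧ x (finRotate n j) = 0
  · exact ⟨h.choose, h.choose_spec.1, by rw [rotateLabel, dif_pos h]⟩
  · have hall : ∀ j, x j ≠ 0 := fun j hj =>
      h (exists_ne_zero_and_finRotate_eq_zero ⟨j, hj⟩ hx)
    exact ⟨(finRotate n).symm a, hall _, by
      rw [rotateLabel_of_forall_ne_zero a hall, Equiv.apply_symm_apply]⟩

end RotateLabel

theorem exists_ne_zero_of_mem_stdSimplex {𝕜 ι : Type*} [Semiring 𝕜] [PartialOrder 𝕜]
    [Nontrivial 𝕜] [Fintype ι] {x : ι → 𝕜} (hx : x ∈ stdSimplex 𝕜 ι) :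
    ∃ j, x j ≠ 0 := by
  obtain ⟨j, -, hj⟩ := Finset.exists_ne_zero_of_sum_ne_zero (hx.2.symm ▸ one_ne_zero)
  exact ⟨j, hj⟩

theorem rotateLabel_vertPt {n k : ℕ} (w : Fin k → Fin n) (i : Fin k) (a : Fin n) :
    rotateLabel (vertPt n k w i) a = finRotate n (w i) :=
  rotateLabel_of_forall_ne_eq_zero a (by simp [vertPt]) fun j hj => by simp [vertPt, hj]

theorem fds_to_sperner_general (n k : ℕ)
    (K : Geometry.SimplicialComplex ℝ (Fin k → Fin n → ℝ))
    (hK : K.space = {x : Fin k → Fin n → ℝ | ∀ i, x i ∈ stdSimplex ℝ (Fin n)})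
    (ℓ : (Fin k → Fin n → ℝ) → (Fin k → Fin n)) :
    ∃ ℓ' : (Fin k → Fin n → ℝ) → (Fin k → Fin n),
      IsFDSLabeling n k K.vertices ℓ' ∧
      EquivLabeling n k K.vertices ℓ ℓ' ∧
      Function.Injective (fun w : Fin k → Fin n => ℓ' (vertPt n k w)) ∧
      ∀ v ∈ K.vertices, ∃ w : Fin k → Fin n,
        (∀ i, v i (w i) ≠ 0) ∧ ℓ' v = ℓ' (vertPt n k w) := by
  have hsupp : ∀ v ∈ K.vertices, ∀ i, ∃ j, v i j ≠ 0 := fun v hv i => by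
    have hv' := K.vertices_subset_space hv
    rw [hK] at hv'
    exact exists_ne_zero_of_mem_stdSimplex (hv' i)
  refine ⟨fun v i => rotateLabel (v i) (ℓ v i), fun v _ i h0 => rotateLabel_apply_eq_zero _ h0,
    fun v _ i h => rotateLabel_of_forall_ne_zero _ h, ?_, fun v hv => ?_⟩
  · intro w w' h
    funext i
    simpa [rotateLabel_vertPt] using congrFun h i
  · choose w hw hlabel using fun i => exists_rotateLabel_eq_finRotate (ℓ v i) (hsupp v hv i)
    exact ⟨w, hw, funext fun i => (hlabel i).trans (rotateLabel_vertPt w i _).symm⟩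

/-- Every factorwise-dual-Sperner labeling of a triangulation `T` of `P(n,k)` has an
equivalent factorwise-dual-Sperner labeling `ℓ'` which is a Sperner labeling of the polytope:
the vertices of `P(n,k)` receive pairwise distinct labels, and every vertex `v` of `T` gets
the label of some vertex `w` of the minimal face of `P(n,k)` containing `v` (i.e. some `w`
with `supp(w_i) ⊆ supp(v_i)` for all `i`). -/
theorem fds_to_sperner (n k : ℕ) (hn : 0 < n) (hk : 0 < k)
    (K : Geometry.SimplicialComplex ℝ (Fin k → Fin n → ℝ))
    (hK : K.space = {x : Fin k → Fin n → ℝ | ∀ i, x i ∈ stdSimplex ℝ (Fin n)})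
    (ℓ : (Fin k → Fin n → ℝ) → (Fin k → Fin n))
    (hℓ : IsFDSLabeling n k K.vertices ℓ) :
    ∃ ℓ' : (Fin k → Fin n → ℝ) → (Fin k → Fin n),
      IsFDSLabeling n k K.vertices ℓ' ∧
      EquivLabeling n k K.vertices ℓ ℓ' ∧
      Function.Injective (fun w : Fin k → Fin n => ℓ' (vertPt n k w)) ∧
      ∀ v ∈ K.vertices, ∃ w : Fin k → Fin n,
        (∀ i, v i (w i) ≠ 0) ∧ ℓ' v = ℓ' (vertPt n k w) :=
  fds_to_sperner_general n k K hK ℓ
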